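/- Fix (x, y, θ, c) with β > 0 and α > 0, and the constraint that the global contact-point velocity equals R(θ)·(v_t, vₙ), where the contact point is p_c = R(θ)·(c, −α) + (x, y). Among all (ẋ, ẏ, θ̇) satisfying this kinematic constraint together with ċ free (ċ determined by the constraint), the minimizer of J(ẋ, ẏ, θ̇) = (ẋ² + ẏ²) + β²θ̇² is ẋ = −(β²/(β²+c²))vₙ sin θ, ẏ = (β²/(β²+c²))vₙ cos θ, θ̇ = (c/(β²+c²))vₙ. -/

import Mathlib

/-- Planar rotation by angle `θ`. -/
noncomputable def Rot (θ : ℝ) (v : ℝ × ℝ) : ℝ × ℝ :=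
  (Real.cos θ * v.1 - Real.sin θ * v.2, Real.sin θ * v.1 + Real.cos θ * v.2)

/-- The kinematic constraint of frictionless pushing: the global velocity of the
contact point `p_c = R(θ)(c, -α) + (x,y)` (with time derivative computed treating `c`
as a state with rate `dc`) equals `R(θ)(v_t, v_n)`. -/
def ContactConstraint (θ c α vt vn dx dy dθ dc : ℝ) : Prop :=
  ((dx, dy) : ℝ × ℝ) + dθ • Rot (θ + Real.pi / 2) ((c, -α)) + Rot θ ((dc, 0)) = Rot θ ((vt, vn))

/-!
Expressed in the slider frame, the constraint splits into a tangential equation, which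
`dc` can always satisfy, and the normal equation `-sin θ ẋ + cos θ ẏ + c θ̇ = vₙ`.
So the problem is to minimise the squared norm of `(ẋ, ẏ, β θ̇)` on the affine plane
`⟨p, (ẋ, ẏ, β θ̇)⟩ = β vₙ` with `p = (-β sin θ, β cos θ, c)`, `‖p‖² = β² + c²`.
Cauchy–Schwarz bounds the cost below by `β² vₙ² / (β² + c²)`, and the claimed
minimiser, the multiple of `p` lying on the plane, attains it.
-/

open Real

theorem contactConstraint_iff {θ c α vt vn dx dy dθ dc : ℝ} :
    ContactConstraint θ c α vt vn dx dy dθ dc ↔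
      cos θ * dx + sin θ * dy + α * dθ + dc = vt ∧
        -sin θ * dx + cos θ * dy + c * dθ = vn := by
  have hpyth := sin_sq_add_cos_sq θ
  simp only [ContactConstraint, Rot, cos_add, sin_add, cos_pi_div_two, sin_pi_div_two,
    Prod.mk_add_mk, Prod.smul_mk, smul_eq_mul, Prod.mk.injEq]
  constructor
  · rintro ⟨h₁, h₂⟩
    constructor
    · linear_combination cos θ * h₁ + sin θ * h₂ + (vt - α * dθ - dc) * hpyth
    · linear_combination -sin θ * h₁ + cos θ * h₂ + (vn - c * dθ) * hpyth
  · rintro ⟨ht, hn⟩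
    constructor
    · linear_combination cos θ * ht - sin θ * hn - dx * hpyth
    · linear_combination sin θ * ht + cos θ * hn - dy * hpyth

theorem sq_mul_add_add_le_of_sq_add_sq_eq_one {a b c β u v w : ℝ} (hab : a ^ 2 + b ^ 2 = 1) :
    (β * (a * u + b * v + c * w)) ^ 2 ≤ (β ^ 2 + c ^ 2) * (u ^ 2 + v ^ 2 + β ^ 2 * w ^ 2) := by
  have h := Finset.sum_mul_sq_le_sq_mul_sq Finset.univ ![β * a, β * b, c] ![u, v, β * w]
  simp only [Fin.sum_univ_three, Matrix.cons_val_zero, Matrix.cons_val_one,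
    Matrix.cons_val_two, Matrix.tail_cons, Matrix.head_cons] at h
  calc (β * (a * u + b * v + c * w)) ^ 2
      = (β * a * u + β * b * v + c * (β * w)) ^ 2 := by ring
    _ ≤ ((β * a) ^ 2 + (β * b) ^ 2 + c ^ 2) * (u ^ 2 + v ^ 2 + (β * w) ^ 2) := h
    _ = (β ^ 2 + c ^ 2) * (u ^ 2 + v ^ 2 + β ^ 2 * w ^ 2) := by
      linear_combination β ^ 2 * (u ^ 2 + v ^ 2 + β ^ 2 * w ^ 2) * hab

theorem least_work_minimizer_general (θ c α β vt vn : ℝ) (hβ : 0 < β) :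
    (∃ dc : ℝ, ContactConstraint θ c α vt vn
        (-(β ^ 2 / (β ^ 2 + c ^ 2)) * vn * Real.sin θ)
        ((β ^ 2 / (β ^ 2 + c ^ 2)) * vn * Real.cos θ)
        ((c / (β ^ 2 + c ^ 2)) * vn) dc) ∧
    ∀ dx dy dθ dc : ℝ, ContactConstraint θ c α vt vn dx dy dθ dc →
      ((-(β ^ 2 / (β ^ 2 + c ^ 2)) * vn * Real.sin θ) ^ 2
        + ((β ^ 2 / (β ^ 2 + c ^ 2)) * vn * Real.cos θ) ^ 2
        + β ^ 2 * ((c / (β ^ 2 + c ^ 2)) * vn) ^ 2)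
      ≤ dx ^ 2 + dy ^ 2 + β ^ 2 * dθ ^ 2 := by
  have hk : 0 < β ^ 2 + c ^ 2 := by positivity
  have hpyth := sin_sq_add_cos_sq θ
  have min_cost : (-(β ^ 2 / (β ^ 2 + c ^ 2)) * vn * sin θ) ^ 2
      + ((β ^ 2 / (β ^ 2 + c ^ 2)) * vn * cos θ) ^ 2
      + β ^ 2 * ((c / (β ^ 2 + c ^ 2)) * vn) ^ 2 = (β * vn) ^ 2 / (β ^ 2 + c ^ 2) := by
    field_simp
    linear_combination vn ^ 2 * β ^ 2 * hpyth
  refine ⟨⟨vt - α * ((c / (β ^ 2 + c ^ 2)) * vn), contactConstraint_iff.2 ⟨by ring, ?_⟩⟩, ?_⟩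
  · field_simp
    linear_combination vn * β ^ 2 * hpyth
  · intro dx dy dθ dc hcon
    rw [min_cost, div_le_iff₀' hk, ← (contactConstraint_iff.1 hcon).2]
    exact sq_mul_add_add_le_of_sq_add_sq_eq_one (by rw [neg_sq]; exact hpyth)

theorem least_work_minimizer (x y θ c α β vt vn : ℝ) (hβ : 0 < β) (hα : 0 < α) :
    (∃ dc : ℝ, ContactConstraint θ c α vt vn
        (-(β ^ 2 / (β ^ 2 + c ^ 2)) * vn * Real.sin θ)
        ((β ^ 2 / (β ^ 2 + c ^ 2)) * vn * Real.cos θ)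
        ((c / (β ^ 2 + c ^ 2)) * vn) dc) ∧
    ∀ dx dy dθ dc : ℝ, ContactConstraint θ c α vt vn dx dy dθ dc →
      ((-(β ^ 2 / (β ^ 2 + c ^ 2)) * vn * Real.sin θ) ^ 2
        + ((β ^ 2 / (β ^ 2 + c ^ 2)) * vn * Real.cos θ) ^ 2
        + β ^ 2 * ((c / (β ^ 2 + c ^ 2)) * vn) ^ 2)
      ≤ dx ^ 2 + dy ^ 2 + β ^ 2 * dθ ^ 2 :=
  least_work_minimizer_general θ c α β vt vn hβ
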